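/- Invariance under crossing change away from the index set: let G_+ and G_− be Gauss diagrams on n strings that differ by switching one crossing between strings j and i (G_− is obtained from G_+ by exchanging the tail and head of one distinguished arrow joining strings j and i and reversing its sign). Then for every subset I' ⊆ {1,…,n} with i ∉ I' and j ∉ I', one has Z_{I', j}(G_+) = Z_{I', j}(G_−). -/
import Mathlib


/-!
Combinatorial Gauss diagrams on `n` strings and the tree invariants `Z I j`.

A Gauss diagram is encoded by a finite set of arrows; each arrow records the
string (an element of `Fin n`) and the position (a rational number, increasing
in the direction of the orientation of the string) of its tail and of its head,
together with a sign `±1`.  Only the induced combinatorial data (linear order of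
the endpoints along each string, the tail/head pairing and the signs) is ever
used by the definitions below.

The tree invariant `Z I j G = ∑_{A ∈ 𝒜_{I,j}} sign(A) ⟨A, G⟩` is computed as a
signed count over all subsets `S` of the arrows of `G` that form a planar tree
diagram with leaves on `I` and trunk on `j`: each pair `(A, φ)` of a planar tree
diagram `A ∈ 𝒜_{I,j}` together with an embedding `φ : A → G` corresponds
bijectively to the subset `S = Im φ` of the arrows of `G`, which is itself a
planar tree diagram with leaves on `I` and trunk on `j`; the contribution of the
pair to the sum is `sign(A) · sign(φ) = (-1)^{#right-pointing arrows of S} · ∏_{a ∈ S} sign(a)`.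
-/

open scoped Classical

/-- An arrow of a Gauss diagram on `n` strings: a tail endpoint, a head
endpoint (each given by the string it lies on and its position along that
string) and a sign. -/
structure GArrow (n : ℕ) where
  tailStr : Fin n
  tailPos : ℚ
  headStr : Fin n
  headPos : ℚ
  sign : ℤ
deriving DecidableEq

namespace GArrow

/-- The two endpoints of an arrow: `false` is the tail, `true` is the head. -/
def ep {n : ℕ} (a : GArrow n) : Bool → Fin n × ℚ
  | false => (a.tailStr, a.tailPos)
  | true => (a.headStr, a.headPos)

end GArrow

/-- A Gauss diagram on `n` strings: a finite set of signed arrows with all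
endpoints pairwise distinct, and all signs equal to `±1`. -/
structure GaussDiagram (n : ℕ) where
  arrows : Finset (GArrow n)
  sign_pm : ∀ a ∈ arrows, a.sign = 1 ∨ a.sign = -1
  endpoints_distinct : ∀ a ∈ arrows, ∀ b ∈ arrows, ∀ s t : Bool,
    a.ep s = b.ep t → a = b ∧ s = t

/-- `S` is a tree diagram with leaves on `I` and trunk on `j`:
* the head and the tail of every arrow lie on different strings;
* for each `i ∈ I` there is exactly one arrow tail on string `i`, and there are
  no arrow tails on strings outside `I`;
* every arrow head lies on a string of `I ∪ {j}`;
* on each string `i ∈ I` all arrow heads precede the unique arrow tail. -/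
def IsTreeDiagram {n : ℕ} (I : Finset (Fin n)) (j : Fin n)
    (S : Finset (GArrow n)) : Prop :=
  (∀ a ∈ S, a.tailStr ≠ a.headStr) ∧
  (∀ i ∈ I, ∃! a, a ∈ S ∧ a.tailStr = i) ∧
  (∀ a ∈ S, a.tailStr ∈ I) ∧
  (∀ a ∈ S, a.headStr ∈ I ∨ a.headStr = j) ∧
  (∀ a ∈ S, ∀ b ∈ S, a.headStr = b.tailStr → a.headPos < b.tailPos)

/-- `ParentRel S s t` : string `s` is the parent of string `t` in the rooted
tree determined by the tree diagram `S`, i.e. the (unique) arrow with tail on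
`t` has its head on `s`. -/
def ParentRel {n : ℕ} (S : Finset (GArrow n)) (s t : Fin n) : Prop :=
  ∃ a ∈ S, a.tailStr = t ∧ a.headStr = s

/-- `Descends S s k` : string `k` belongs to the subtree of string `s` (it is
`s` itself or an iterated child of `s`). -/
def Descends {n : ℕ} (S : Finset (GArrow n)) : Fin n → Fin n → Prop :=
  Relation.ReflTransGen (ParentRel S)

/-- `S` is a *planar* tree diagram with leaves on `I` and trunk on `j`: the
rooted tree `T_S` determined by `S` can be drawn in the plane so that the
clockwise order of its leaves, starting from the root on string `j`, is the
order of the string numbers.  Combinatorially this says that: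
* the parent relation makes the strings carrying the arrows into a tree rooted
  at `j` (every leaf string is an iterated child of `j`);
* the whole subtree hanging from an arrow lies on the same side of the string
  carrying the head of that arrow as its tail does;
* two subtrees hanging on the same side of a common string are ordered, along
  that string, compatibly with the order of the strings: for two arrow heads on
  the same string, with both tails on the left, the subtree attached closer to
  the beginning of the string is the one carrying the larger string numbers,
  while for two tails on the right it is the one carrying the smaller string
  numbers. -/
def IsPlanarTreeDiagram {n : ℕ} (I : Finset (Fin n)) (j : Fin n)
    (S : Finset (GArrow n)) : Prop :=
  IsTreeDiagram I j S ∧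
  (∀ i ∈ I, Relation.TransGen (ParentRel S) j i) ∧
  (∀ a ∈ S, ∀ k : Fin n, Descends S a.tailStr k →
    (a.tailStr < a.headStr ↔ k < a.headStr)) ∧
  (∀ a ∈ S, ∀ b ∈ S, a.headStr = b.headStr → a.headPos < b.headPos →
    ∀ k k' : Fin n, Descends S a.tailStr k → Descends S b.tailStr k' →
      ((a.tailStr < a.headStr → b.tailStr < b.headStr → k' < k) ∧
       (a.headStr < a.tailStr → b.headStr < b.tailStr → k < k')))

/-- The sign `(-1)^q` of an (embedded) arrow diagram, where `q` is the number
of right-pointing arrows (tail on a string of smaller number than the head). -/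
noncomputable def treeSign {n : ℕ} (S : Finset (GArrow n)) : ℤ :=
  (-1) ^ (S.filter fun a => a.tailStr < a.headStr).card

/-- The tree invariant `Z_{I,j}(G) = ∑_{A ∈ 𝒜_{I,j}} sign(A)·⟨A,G⟩`, computed
as the signed count of embedded planar tree diagrams with leaves on `I` and
trunk on `j` inside `G`.  In particular `Z ∅ j G = 1` (only `S = ∅`
contributes). -/
noncomputable def Z {n : ℕ} (I : Finset (Fin n)) (j : Fin n)
    (G : GaussDiagram n) : ℤ :=
  ∑ S ∈ G.arrows.powerset,
    if IsPlanarTreeDiagram I j S then treeSign S * ∏ a ∈ S, a.sign else 0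

/-- **Invariance under a crossing change away from the index set.**  If `Gm` is
obtained from `Gp` by switching one crossing between strings `j` and `i`
(exchanging the tail and the head of one distinguished arrow joining strings
`j` and `i` and reversing its sign), then for every subset `I'` with `i ∉ I'`
and `j ∉ I'` one has `Z_{I',j}(G₊) = Z_{I',j}(G₋)`. -/
theorem crossing_change_invariance {n : ℕ} (Gp Gm : GaussDiagram n)
    (j i : Fin n) (a : GArrow n) (ha : a ∈ Gp.arrows)
    (hjoins : (a.tailStr = j ∧ a.headStr = i) ∨ (a.tailStr = i ∧ a.headStr = j))
    (hGm : Gm.arrows =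
      insert (GArrow.mk a.headStr a.headPos a.tailStr a.tailPos (-a.sign))
        (Gp.arrows.erase a))
    (I' : Finset (Fin n)) (hi : i ∉ I') (hj : j ∉ I') :
    Z I' j Gp = Z I' j Gm := by
  classical
  set a' : GArrow n := ⟨a.headStr, a.headPos, a.tailStr, a.tailPos, -a.sign⟩ with ha'def
  set E : Finset (GArrow n) := Gp.arrows.erase a with hE
  have hanotE : a ∉ E := Finset.notMem_erase a _
  have ha'G : a' ∉ Gp.arrows := by
    intro h
    have h2 := Gp.endpoints_distinct a ha a' h true false rfl
    exact Bool.noConfusion h2.2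
  have ha'E : a' ∉ E := fun h => ha'G (Finset.mem_of_mem_erase h)
  have hGp : Gp.arrows = insert a E := (Finset.insert_erase ha).symm
  have key : ∀ (S : Finset (GArrow n)) (b : GArrow n), b ∈ S → b.tailStr ∉ I' →
      ¬ IsPlanarTreeDiagram I' j S := fun S b hb hbt hpl => hbt (hpl.1.2.2.1 b hb)
  have htail : a.tailStr ∉ I' := by
    rcases hjoins with ⟨h, _⟩ | ⟨h, _⟩ <;> rw [h] <;> assumption
  have htail' : a'.tailStr ∉ I' := by
    show a.headStr ∉ I'
    rcases hjoins with ⟨_, h⟩ | ⟨_, h⟩ <;> rw [h] <;> assumption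
  unfold Z
  rw [hGp, hGm]
  rw [Finset.sum_powerset_insert hanotE, Finset.sum_powerset_insert ha'E]
  have z1 : ∀ S ∈ E.powerset,
      (if IsPlanarTreeDiagram I' j (insert a S) then
        treeSign (insert a S) * ∏ b ∈ insert a S, b.sign else 0) = 0 := by
    intro S _
    exact if_neg (key _ a (Finset.mem_insert_self a S) htail)
  have z2 : ∀ S ∈ E.powerset,
      (if IsPlanarTreeDiagram I' j (insert a' S) then
        treeSign (insert a' S) * ∏ b ∈ insert a' S, b.sign else 0) = 0 := by
    intro S _
    exact if_neg (key _ a' (Finset.mem_insert_self a' S) htail')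
  rw [Finset.sum_eq_zero z1, Finset.sum_eq_zero z2]
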